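/- arXiv:2312.03593 — 2 statements merged into one kernel-verified Lean document; each statement's English description precedes it below -/
import Mathlib

section
/- Let k ≥ 2, let g : (k+1)^𝒳 → ℝ≥0 be a normalized k-submodular function (not necessarily monotone), let 𝟎 = x⁰ ⊑ x¹ ⊑ … ⊑ xᵐ = 𝐱 be a greedy chain for g, let τ ∈ ℝ, and let v be a k-set with g(v) ≥ τ. Then τ − g(𝐱) ≤ 2·g(𝐱) + Σ_{y ∈ E(v) ∖ E(𝐱)} Δ_{y, v(y)} g(𝐱). -/
/-- A `k`-set: an assignment of each ground element to one of `k` parts or to none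
(`none` meaning the element belongs to no part).  This encodes a tuple
`(S_1, …, S_k)` of pairwise disjoint subsets of `X`. -/
abbrev KSet (X : Type*) (k : ℕ) := X → Option (Fin k)

namespace KSet

variable {X : Type*} {k : ℕ}

/-- The empty `k`-set `𝟎 = (∅, …, ∅)`. -/
def bot (X : Type*) (k : ℕ) : KSet X k := fun _ => none

/-- `le s t` is the partial order `s ⊑ t`, i.e. `Sᵢ ⊆ Tᵢ` for every `i ∈ [k]`. -/
def le (s t : KSet X k) : Prop := ∀ (x : X) (i : Fin k), s x = some i → t x = some i

/-- The meet `s ⊓ t`, whose `i`-th component is `Sᵢ ∩ Tᵢ`. -/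
def meet (s t : KSet X k) : KSet X k := fun x => if s x = t x then s x else none

/-- The join `s ⊔ t`, whose `i`-th component is `(Sᵢ ∪ Tᵢ) \ ⋃_{j ≠ i} (Sⱼ ∪ Tⱼ)`. -/
def join (s t : KSet X k) : KSet X k := fun x =>
  match s x, t x with
  | none, b => b
  | some i, none => some i
  | some i, some j => if i = j then some i else none

/-- The `k`-set `(x, i)` whose only nonempty component is `Sᵢ = {x}`. -/
def single [DecidableEq X] (x : X) (i : Fin k) : KSet X k :=
  fun y => if y = x then some i else none

/-- `s ⊔ (x, i)`: add the element `x` to the `i`-th part of `s`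
(intended for `x ∉ E(s)`). -/
def add [DecidableEq X] (s : KSet X k) (x : X) (i : Fin k) : KSet X k :=
  Function.update s x (some i)

end KSet

/-- The marginal gain `Δ_{x,i} g (s) = g (s ⊔ (x,i)) - g s`. -/
def marg {X : Type*} [DecidableEq X] {k : ℕ} (g : KSet X k → ℝ) (s : KSet X k)
    (x : X) (i : Fin k) : ℝ :=
  g (KSet.add s x i) - g s

/-- `g` is `k`-submodular: `g (s ⊓ t) + g (s ⊔ t) ≤ g s + g t` for all `k`-sets. -/
def KSubmodular {X : Type*} {k : ℕ} (g : KSet X k → ℝ) : Prop :=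
  ∀ s t : KSet X k, g (KSet.meet s t) + g (KSet.join s t) ≤ g s + g t

/-- `g` is monotone with respect to `⊑`. -/
def KMonotone {X : Type*} {k : ℕ} (g : KSet X k → ℝ) : Prop :=
  ∀ s t : KSet X k, KSet.le s t → g s ≤ g t

/-- The weight `w(s) = ∑_{x ∈ E(s)} w x` of a `k`-set. -/
def wtot {X : Type*} [Fintype X] {k : ℕ} (w : X → ℝ) (s : KSet X k) : ℝ :=
  ∑ x ∈ Finset.univ.filter (fun x => s x ≠ none), w x

/-- A greedy chain for `g`: `c 0 = 𝟎` and each step adds one new element at a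
position maximizing the marginal gain over `i ∈ [k]`. -/
def GreedyChain {X : Type*} [DecidableEq X] {k : ℕ} (g : KSet X k → ℝ) (m : ℕ)
    (c : ℕ → KSet X k) : Prop :=
  c 0 = KSet.bot X k ∧
  ∀ p, p < m → ∃ (xp : X) (ip : Fin k),
    c p xp = none ∧
    c (p + 1) = KSet.add (c p) xp ip ∧
    ∀ i : Fin k, marg g (c p) xp i ≤ marg g (c p) xp ip

/-!
Along the greedy chain `c 0 ⊑ … ⊑ c m`, follow the hybrids `o p` that agree with `c p` on
`E(c p)` and with `v` elsewhere, so that `o 0 = v`. A greedy step changes `o p` only at the new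
element `x`; orthant submodularity and pairwise monotonicity (`Δ_{x,i} + Δ_{x,j} ≥ 0` for `i ≠ j`,
available because `k ≥ 2`) bound the loss `g (o p) - g (o (p+1))` by twice the greedy gain
`g (c (p+1)) - g (c p)`. Telescoping gives `g v ≤ g (o m) + 2 g (c m)`, and since `o m` is `c m`
with the elements of `E(v) ∖ E(c m)` added, orthant submodularity bounds `g (o m)` by
`g (c m) + ∑_{y ∈ E(v) ∖ E(c m)} Δ_{y, v(y)} g (c m)`.
-/

namespace KSet

variable {X : Type*} {k : ℕ}

theorem le_refl (s : KSet X k) : KSet.le s s := fun _ _ h => h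

/-- The hybrid `k`-set that agrees with `s` on `E(s)` and with `t` elsewhere; in the paper's
notation it is `(t ⊔ s) ⊔ s`. -/
def orElse (s t : KSet X k) : KSet X k := fun y => (s y).or (t y)

theorem bot_orElse (t : KSet X k) : orElse (bot X k) t = t := rfl

theorem le_orElse (s t : KSet X k) : KSet.le s (orElse s t) := by
  intro y i h
  simp [orElse, h]

variable [DecidableEq X]

theorem meet_add_of_le {s t : KSet X k} (hst : KSet.le s t) {x : X} (hx : t x = none)
    (i : Fin k) : meet (add s x i) t = s := by
  funext y
  by_cases hy : y = x
  · subst hy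
    have hs : s y = none := Option.eq_none_iff_forall_ne_some.2 fun j hj => by
      simp [hst y j hj] at hx
    simp [meet, add, hx, hs]
  · simp only [meet, add, Function.update_of_ne hy]
    cases hsy : s y with
    | none => cases t y <;> simp
    | some j => simp [hst y j hsy]

theorem join_add_of_le {s t : KSet X k} (hst : KSet.le s t) {x : X} (hx : t x = none)
    (i : Fin k) : join (add s x i) t = add t x i := by
  funext y
  by_cases hy : y = x
  · subst hy
    simp [join, add, hx]
  · simp only [join, add, Function.update_of_ne hy]
    cases hsy : s y with
    | none => cases t y <;> simp
    | some j => simp [hst y j hsy]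

theorem meet_add_add_of_ne {s : KSet X k} {x : X} (hx : s x = none) {i j : Fin k}
    (hij : i ≠ j) : meet (add s x i) (add s x j) = s := by
  funext y
  by_cases hy : y = x
  · subst hy; simp [meet, add, hx, hij]
  · simp [meet, add, Function.update_of_ne hy]

theorem join_add_add_of_ne {s : KSet X k} {x : X} (hx : s x = none) {i j : Fin k}
    (hij : i ≠ j) : join (add s x i) (add s x j) = s := by
  funext y
  by_cases hy : y = x
  · subst hy; simp [join, add, hx, hij]
  · simp only [join, add, Function.update_of_ne hy]
    cases s y <;> simp

theorem add_orElse (s t : KSet X k) (x : X) (i : Fin k) :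
    orElse (add s x i) t = add (orElse s t) x i := by
  funext y
  by_cases hy : y = x
  · subst hy; simp [orElse, add]
  · simp [orElse, add, Function.update_of_ne hy]

theorem orElse_eq_piecewise [Fintype X] (s t : KSet X k) :
    orElse s t = (Finset.univ.filter fun y => t y ≠ none ∧ s y = none).piecewise t s := by
  funext y
  by_cases hs : s y = none
  · by_cases ht : t y = none <;> simp [orElse, Finset.piecewise, hs, ht]
  · obtain ⟨j, hj⟩ := Option.ne_none_iff_exists'.1 hs
    simp [orElse, Finset.piecewise, hj]

end KSet

theorem apply_add_eq_add_marg {X : Type*} [DecidableEq X] {k : ℕ} (g : KSet X k → ℝ)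
    (s : KSet X k) (x : X) (i : Fin k) : g (KSet.add s x i) = g s + marg g s x i := by
  unfold marg; ring

namespace KSubmodular

variable {X : Type*} [DecidableEq X] {k : ℕ} {g : KSet X k → ℝ}

/-- Orthant submodularity. -/
theorem marg_le_of_le (hsub : KSubmodular g) {s t : KSet X k} (hst : KSet.le s t) {x : X}
    (hx : t x = none) (i : Fin k) : marg g t x i ≤ marg g s x i := by
  have h := hsub (KSet.add s x i) t
  rw [KSet.meet_add_of_le hst hx, KSet.join_add_of_le hst hx] at h
  unfold marg
  linarith

/-- Pairwise monotonicity. -/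
theorem marg_add_marg_nonneg (hsub : KSubmodular g) {s : KSet X k} {x : X} (hx : s x = none)
    {i j : Fin k} (hij : i ≠ j) : 0 ≤ marg g s x i + marg g s x j := by
  have h := hsub (KSet.add s x i) (KSet.add s x j)
  rw [KSet.meet_add_add_of_ne hx hij, KSet.join_add_add_of_ne hx hij] at h
  unfold marg
  linarith

theorem le_add_sum_marg_piecewise [Fintype X] (hsub : KSubmodular g) (s t : KSet X k)
    {F : Finset X} (hF : ∀ y ∈ F, s y = none) :
    g (F.piecewise t s) ≤ g s + ∑ y ∈ F, (t y).elim 0 (marg g s y) := by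
  induction F using Finset.induction_on with
  | empty => simp
  | @insert z F hz ih =>
    have ih := ih fun y hy => hF y (Finset.mem_insert_of_mem hy)
    have hsF : KSet.le s (F.piecewise t s) := by
      intro y j hj
      have hy : y ∉ F := fun hy => by simp [hF y (Finset.mem_insert_of_mem hy)] at hj
      rwa [Finset.piecewise_eq_of_notMem _ _ _ hy]
    have hsFz : F.piecewise t s z = none := by
      rw [Finset.piecewise_eq_of_notMem _ _ _ hz]
      exact hF z (Finset.mem_insert_self z F)
    rw [Finset.piecewise_insert, Finset.sum_insert hz]
    cases htz : t z with
    | none =>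
      rw [Function.update_eq_self_iff.2 hsFz.symm, Option.elim_none, zero_add]
      exact ih
    | some i =>
      rw [← KSet.add, apply_add_eq_add_marg g, Option.elim_some]
      linarith [hsub.marg_le_of_le hsF hsFz i]

variable [Nontrivial (Fin k)] {c s : KSet X k} {x : X} {ip : Fin k}

theorem neg_marg_le_marg_of_greedy (hsub : KSubmodular g) (hcs : KSet.le c s)
    (hx : s x = none) (hgreedy : ∀ i, marg g c x i ≤ marg g c x ip) (i : Fin k) :
    -marg g c x ip ≤ marg g s x i := by
  obtain ⟨j, hji⟩ := exists_ne i
  have hpair := hsub.marg_add_marg_nonneg hx hji.symm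
  have hanti := hsub.marg_le_of_le hcs hx j
  linarith [hgreedy j]

theorem marg_nonneg_of_greedy (hsub : KSubmodular g) (hx : c x = none)
    (hgreedy : ∀ i, marg g c x i ≤ marg g c x ip) : 0 ≤ marg g c x ip := by
  linarith [hsub.neg_marg_le_marg_of_greedy (KSet.le_refl c) hx hgreedy ip]

/-- Both `o` and `o ⊔ (x, ip)` are compared with `o` stripped of `x`. -/
theorem le_add_two_mul_marg_of_greedy (hsub : KSubmodular g) {o : KSet X k}
    (hco : KSet.le c o) (hx : c x = none) (hgreedy : ∀ i, marg g c x i ≤ marg g c x ip) :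
    g o ≤ g (KSet.add o x ip) + 2 * marg g c x ip := by
  set s := Function.update o x none
  have hsx : s x = none := Function.update_self ..
  have hcs : KSet.le c s := by
    intro y j hj
    have hy : y ≠ x := by rintro rfl; simp [hx] at hj
    simpa only [s, Function.update_of_ne hy] using hco y j hj
  have hnew : g (KSet.add o x ip) = g s + marg g s x ip := by
    rw [← apply_add_eq_add_marg g]
    simp only [s, KSet.add, Function.update_idem]
  have hlow := hsub.neg_marg_le_marg_of_greedy hcs hsx hgreedy ip
  have hold : g o ≤ g s + marg g c x ip := by
    cases hox : o x with
    | none =>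
      have : s = o := by simp only [s, ← hox, Function.update_eq_self]
      rw [← this]
      linarith [hsub.marg_nonneg_of_greedy hx hgreedy]
    | some iv =>
      have : o = KSet.add s x iv := by
        simp only [s, KSet.add, Function.update_idem, ← hox, Function.update_eq_self]
      rw [this, apply_add_eq_add_marg g]
      linarith [hsub.marg_le_of_le hcs hsx iv, hgreedy iv]
  linarith

end KSubmodular

theorem GreedyChain.le_orElse_add_two_mul {X : Type*} [DecidableEq X] {k : ℕ}
    [Nontrivial (Fin k)] {g : KSet X k → ℝ} {m : ℕ} {c : ℕ → KSet X k}
    (hc : GreedyChain g m c) (hsub : KSubmodular g) (v : KSet X k) :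
    ∀ p ≤ m, g v + 2 * g (KSet.bot X k) ≤ g (KSet.orElse (c p) v) + 2 * g (c p) := by
  intro p
  induction p with
  | zero => intro _; rw [hc.1, KSet.bot_orElse]
  | succ p ih =>
    intro hp
    obtain ⟨x, ip, hx, hstep, hgreedy⟩ := hc.2 p hp
    have hmove := hsub.le_add_two_mul_marg_of_greedy (KSet.le_orElse (c p) v) hx hgreedy
    rw [hstep, KSet.add_orElse, apply_add_eq_add_marg g (c p)]
    linarith [ih (by omega)]

theorem tau_sub_le_nonmonotone_general {X : Type*} [Fintype X] [DecidableEq X] {k : ℕ} (hk : 2 ≤ k)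
    (g : KSet X k → ℝ) (hsub : KSubmodular g)
    (hnorm : g (KSet.bot X k) = 0)
    (m : ℕ) (c : ℕ → KSet X k) (hc : GreedyChain g m c)
    (τ : ℝ) (v : KSet X k) (hv : τ ≤ g v) :
    τ - g (c m) ≤ 2 * g (c m) +
      ∑ y ∈ Finset.univ.filter (fun y => v y ≠ none ∧ c m y = none),
        (v y).elim 0 (fun i => marg g (c m) y i) := by
  have : Nontrivial (Fin k) := Fin.nontrivial_iff_two_le.2 hk
  have hchain := hc.le_orElse_add_two_mul hsub v m le_rfl
  have hfill := hsub.le_add_sum_marg_piecewise (c m) v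
    (F := Finset.univ.filter fun y => v y ≠ none ∧ c m y = none)
    fun y hy => (Finset.mem_filter.1 hy).2.2
  rw [← KSet.orElse_eq_piecewise] at hfill
  rw [hnorm] at hchain
  linarith

/-- For `k ≥ 2`, a (not necessarily monotone) normalized
`k`-submodular `g`, a greedy chain `𝟎 = x⁰ ⊑ … ⊑ xᵐ = 𝐱`, `τ : ℝ`, and a
`k`-set `v` with `g v ≥ τ`:
`τ - g 𝐱 ≤ 2 * g 𝐱 + ∑_{y ∈ E(v) \ E(𝐱)} Δ_{y, v(y)} g (𝐱)`. -/
theorem tau_sub_le_nonmonotone {X : Type*} [Fintype X] [DecidableEq X] {k : ℕ} (hk : 2 ≤ k)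
    (g : KSet X k → ℝ) (hnn : ∀ s : KSet X k, 0 ≤ g s) (hsub : KSubmodular g)
    (hnorm : g (KSet.bot X k) = 0)
    (m : ℕ) (c : ℕ → KSet X k) (hc : GreedyChain g m c)
    (τ : ℝ) (v : KSet X k) (hv : τ ≤ g v) :
    τ - g (c m) ≤ 2 * g (c m) +
      ∑ y ∈ Finset.univ.filter (fun y => v y ≠ none ∧ c m y = none),
        (v y).elim 0 (fun i => marg g (c m) y i) :=
  tau_sub_le_nonmonotone_general hk g hsub hnorm m c hc τ v hv
end

section
/- Let k ≥ 2, let g : (k+1)^𝒳 → ℝ≥0 be a normalized k-submodular function (not necessarily monotone), w : 𝒳 → ℝ≥0 a weight function, ε ∈ (0,1], τ > 0, θ ≥ 0, let 𝟎 = x⁰ ⊑ x¹ ⊑ … ⊑ xᵐ = 𝐱 be a greedy chain for g, and let v be a k-set with g(v) ≥ τ and θ·w(v) ≤ ε·τ. Suppose that for every y ∈ E(v) ∖ E(𝐱) there is a k-set s_y ⊑ 𝐱 with y ∉ E(s_y) and max_{i∈[k]} Δ_{y,i}g(s_y) ≤ θ·w(y). Then g(𝐱) ≥ (1−ε)τ/3.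 -/
/-! Compare the greedy chain with the hybrid `k`-sets `(c p).overwrite v`, in which the elements
of `E(c p)` keep their part and all others take their part in `v`; they start at `v` and lie
above `c p`. At step `p` the hybrid changes only at the new element `x`, whose part becomes the
greedy choice `i`; by orthant submodularity and pairwise monotonicity (the latter needs a second
part `j ≠ i`, hence `k ≥ 2`) this lowers `g` by at most twice the greedy gain. Summing,
`g v - g ((c m).overwrite v) ≤ 2 g (c m)`. Erasing from the last hybrid the elements of
`E(v) \ E(c m)` costs at most `θ w(y)` each, by orthant submodularity and the goodness
hypothesis, hence at most `ε τ` in total; so `g (c m) ≥ g v - 2 g (c m) - ε τ`. -/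

namespace KSet

variable {X : Type*} {k : ℕ}

theorem le_trans {s t u : KSet X k} (hst : s.le t) (htu : t.le u) : s.le u :=
  fun x i hx => htu x i (hst x i hx)

def overwrite (s v : KSet X k) : KSet X k := fun y => (s y).or (v y)

@[simp]
theorem overwrite_bot (v : KSet X k) : (bot X k).overwrite v = v := rfl

theorem le_overwrite (s v : KSet X k) : s.le (s.overwrite v) := by
  intro y i hy
  simp [overwrite, hy]

variable [DecidableEq X]

theorem overwrite_add (s v : KSet X k) (x : X) (i : Fin k) :
    (s.add x i).overwrite v = (s.overwrite v).add x i := by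
  funext y
  by_cases hy : y = x
  · subst hy; simp [overwrite, add]
  · simp [overwrite, add, hy]

theorem le_update_overwrite {s : KSet X k} {x : X} (hsx : s x = none) (v : KSet X k) :
    s.le (Function.update (s.overwrite v) x none) := by
  intro y i hy
  have hyx : y ≠ x := by rintro rfl; simp [hsx] at hy
  simp [overwrite, hy, hyx]

def erase (u : KSet X k) (F : Finset X) : KSet X k := fun y => if y ∈ F then none else u y

@[simp]
theorem erase_empty (u : KSet X k) : u.erase ∅ = u := by
  funext y
  simp [erase]

theorem le_erase {b u : KSet X k} (hbu : b.le u) {F : Finset X} (hbF : ∀ y ∈ F, b y = none) :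
    b.le (u.erase F) := by
  intro y i hy
  have hyF : y ∉ F := fun h => by simp [hbF y h] at hy
  simp [erase, hyF, hbu y i hy]

theorem erase_overwrite [Fintype X] (s v : KSet X k) :
    (s.overwrite v).erase {y | s y = none ∧ v y ≠ none} = s := by
  funext y
  rcases hs : s y with _ | i <;> by_cases hv : v y = none <;> simp [erase, overwrite, hs, hv]

end KSet

section Marginals

variable {X : Type*} [DecidableEq X] {k : ℕ} {g : KSet X k → ℝ}

theorem marg_le_marg_of_le (hsub : KSubmodular g) {s t : KSet X k} (hst : s.le t)
    {x : X} (hsx : s x = none) (htx : t x = none) (i : Fin k) :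
    marg g t x i ≤ marg g s x i := by
  have hmeet : (s.add x i).meet t = s := by
    funext y
    by_cases hy : y = x
    · subst hy; simp [KSet.meet, KSet.add, htx, hsx]
    rcases hs : s y with _ | j
    · simp [KSet.meet, KSet.add, hy, hs]
    · simp [KSet.meet, KSet.add, hy, hs, hst y j hs]
  have hjoin : (s.add x i).join t = t.add x i := by
    funext y
    by_cases hy : y = x
    · subst hy; simp [KSet.join, KSet.add, htx]
    rcases hs : s y with _ | j
    · simp [KSet.join, KSet.add, hy, hs]
    · simp [KSet.join, KSet.add, hy, hs, hst y j hs]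
  have h := hsub (s.add x i) t
  rw [hmeet, hjoin] at h
  simp only [marg]
  linarith

theorem marg_add_marg_nonneg (hsub : KSubmodular g) {s : KSet X k} {x : X} (hsx : s x = none)
    {i j : Fin k} (hij : i ≠ j) :
    0 ≤ marg g s x i + marg g s x j := by
  have hmeet : (s.add x i).meet (s.add x j) = s := by
    funext y
    by_cases hy : y = x
    · subst hy; simp [KSet.meet, KSet.add, hsx, hij]
    · simp [KSet.meet, KSet.add, hy]
  have hjoin : (s.add x i).join (s.add x j) = s := by
    funext y
    by_cases hy : y = x
    · subst hy; simp [KSet.join, KSet.add, hij, hsx]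
    · rcases hs : s y with _ | l <;> simp [KSet.join, KSet.add, hy, hs]
  have h := hsub (s.add x i) (s.add x j)
  rw [hmeet, hjoin] at h
  simp only [marg]
  linarith

theorem marg_nonneg_of_forall_le [Nontrivial (Fin k)] (hsub : KSubmodular g) {s : KSet X k}
    {x : X} (hsx : s x = none) {i : Fin k} (hmax : ∀ j, marg g s x j ≤ marg g s x i) :
    0 ≤ marg g s x i := by
  obtain ⟨j, hji⟩ := exists_ne i
  linarith [marg_add_marg_nonneg hsub hsx hji.symm, hmax j]

theorem sub_add_le_two_mul_marg [Nontrivial (Fin k)] (hsub : KSubmodular g) {s u : KSet X k}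
    {x : X} (hsu : s.le (Function.update u x none)) (hsx : s x = none) {i : Fin k}
    (hmax : ∀ j, marg g s x j ≤ marg g s x i) :
    g u - g (u.add x i) ≤ 2 * marg g s x i := by
  set t : KSet X k := Function.update u x none
  have htx : t x = none := by simp [t]
  have hu : u = Function.update t x (u x) := by simp [t]
  have hadd : u.add x i = t.add x i := by simp [KSet.add, t]
  have hgain := marg_nonneg_of_forall_le hsub hsx hmax
  rw [hadd]
  rcases hux : u x with _ | j
  · obtain ⟨j, hji⟩ := exists_ne i
    have hu' : u = t := by rw [hu, hux, ← htx, Function.update_eq_self]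
    have := marg_add_marg_nonneg hsub htx hji.symm
    have := marg_le_marg_of_le hsub hsu hsx htx j
    rw [hu']
    simp only [marg] at *
    linarith [hmax j]
  · rw [hu, hux]
    obtain rfl | hji := eq_or_ne j i
    · simpa [KSet.add] using hgain
    have := marg_add_marg_nonneg hsub htx hji.symm
    have := marg_le_marg_of_le hsub hsu hsx htx j
    change g (t.add x j) - _ ≤ _
    simp only [marg] at *
    linarith [hmax j]

theorem sub_sum_le_erase (hsub : KSubmodular g) (δ : X → ℝ) {b u : KSet X k} (hbu : b.le u)
    (F : Finset X) (hbF : ∀ y ∈ F, b y = none) (huF : ∀ y ∈ F, u y ≠ none)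
    (hgood : ∀ y ∈ F, ∃ s : KSet X k, s.le b ∧ s y = none ∧ ∀ i, marg g s y i ≤ δ y) :
    g u - ∑ y ∈ F, δ y ≤ g (u.erase F) := by
  induction F using Finset.induction_on with
  | empty => simp
  | @insert a F haF ih =>
    simp only [Finset.mem_insert, forall_eq_or_imp] at hbF huF hgood
    obtain ⟨j, hj⟩ := Option.ne_none_iff_exists'.mp huF.1
    obtain ⟨s, hsb, hsa, hsδ⟩ := hgood.1
    have hle : s.le (u.erase (insert a F)) :=
      KSet.le_trans hsb (KSet.le_erase hbu (by simpa using ⟨hbF.1, hbF.2⟩))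
    have herase : u.erase F = (u.erase (insert a F)).add a j := by
      funext y
      by_cases hy : y = a
      · subst hy; simp [KSet.erase, KSet.add, haF, hj]
      · simp [KSet.erase, KSet.add, hy]
    have := marg_le_marg_of_le hsub hle hsa (by simp [KSet.erase]) j
    have := ih hbF.2 huF.2 hgood.2
    rw [Finset.sum_insert haF, herase] at *
    simp only [marg] at *
    linarith [hsδ j]

end Marginals

namespace GreedyChain

variable {X : Type*} [DecidableEq X] {k : ℕ} {g : KSet X k → ℝ} {m : ℕ} {c : ℕ → KSet X k}

theorem sub_overwrite_le_two_mul [Nontrivial (Fin k)] (hsub : KSubmodular g)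
    (hc : GreedyChain g m c) (hnorm : g (KSet.bot X k) = 0) (v : KSet X k) {n : ℕ}
    (hn : n ≤ m) : g v - g ((c n).overwrite v) ≤ 2 * g (c n) := by
  induction n with
  | zero => simp [hc.1, hnorm]
  | succ p ih =>
    obtain ⟨x, i, hx, hstep, hmax⟩ := hc.2 p hn
    have := sub_add_le_two_mul_marg hsub (KSet.le_update_overwrite hx v) hx hmax
    rw [← KSet.overwrite_add, ← hstep] at this
    simp only [marg, ← hstep] at this
    linarith [ih (by omega)]

end GreedyChain

theorem good_elements_nonmonotone_general {X : Type*} [Fintype X] [DecidableEq X] {k : ℕ} (hk : 2 ≤ k)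
    (g : KSet X k → ℝ) (hsub : KSubmodular g)
    (hnorm : g (KSet.bot X k) = 0)
    (w : X → ℝ) (hw : ∀ x, 0 ≤ w x)
    (ε τ θ : ℝ) (hθ : 0 ≤ θ)
    (m : ℕ) (c : ℕ → KSet X k) (hc : GreedyChain g m c)
    (v : KSet X k) (hgv : τ ≤ g v) (hwv : θ * wtot w v ≤ ε * τ)
    (hgood : ∀ y : X, v y ≠ none → c m y = none →
      ∃ s : KSet X k, KSet.le s (c m) ∧ s y = none ∧
        ∀ i : Fin k, marg g s y i ≤ θ * w y) :
    (1 - ε) * τ / 3 ≤ g (c m) := by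
  have : Nontrivial (Fin k) := Fin.nontrivial_iff_two_le.mpr hk
  set D : Finset X := {y | c m y = none ∧ v y ≠ none}
  have hgreedy := hc.sub_overwrite_le_two_mul hsub hnorm v le_rfl
  have herase := sub_sum_le_erase hsub (fun y => θ * w y) (KSet.le_overwrite (c m) v) D
    (by simp +contextual [D]) (by simp +contextual [D, KSet.overwrite])
    (fun y hy => by simp only [D, Finset.mem_filter] at hy; exact hgood y hy.2.2 hy.2.1)
  rw [KSet.erase_overwrite, ← Finset.mul_sum] at herase
  have hD : ∑ y ∈ D, w y ≤ wtot w v :=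
    Finset.sum_le_sum_of_subset_of_nonneg (by intro y; simp +contextual [D])
      (fun y _ _ => hw y)
  linarith [mul_le_mul_of_nonneg_left hD hθ]

/-- Non-monotone good-elements bound: for `k ≥ 2`, a (not
necessarily monotone) normalized `k`-submodular `g`, weights `w ≥ 0`,
`ε ∈ (0,1]`, `τ > 0`, `θ ≥ 0`, a greedy chain ending in `𝐱 = c m`, and a
`k`-set `v` with `g v ≥ τ` and `θ·w(v) ≤ ε·τ`, if every `y ∈ E(v) \ E(𝐱)`
admits a `k`-set `s_y ⊑ 𝐱` with `y ∉ E(s_y)` and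
`max_{i ∈ [k]} Δ_{y,i} g (s_y) ≤ θ·w(y)`, then `g 𝐱 ≥ (1-ε)τ/3`. -/
theorem good_elements_nonmonotone {X : Type*} [Fintype X] [DecidableEq X] {k : ℕ} (hk : 2 ≤ k)
    (g : KSet X k → ℝ) (hnn : ∀ s : KSet X k, 0 ≤ g s) (hsub : KSubmodular g)
    (hnorm : g (KSet.bot X k) = 0)
    (w : X → ℝ) (hw : ∀ x, 0 ≤ w x)
    (ε τ θ : ℝ) (hε0 : 0 < ε) (hε1 : ε ≤ 1) (hτ : 0 < τ) (hθ : 0 ≤ θ)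
    (m : ℕ) (c : ℕ → KSet X k) (hc : GreedyChain g m c)
    (v : KSet X k) (hgv : τ ≤ g v) (hwv : θ * wtot w v ≤ ε * τ)
    (hgood : ∀ y : X, v y ≠ none → c m y = none →
      ∃ s : KSet X k, KSet.le s (c m) ∧ s y = none ∧
        ∀ i : Fin k, marg g s y i ≤ θ * w y) :
    (1 - ε) * τ / 3 ≤ g (c m) :=
  good_elements_nonmonotone_general hk g hsub hnorm w hw ε τ θ hθ m c hc v hgv hwv hgood
end
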